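/- Define δ(B) := det(𝔖(B)) mod 4 where 𝔖(B) = V(B) + V(B)ᵀ. Then δ is a mutation invariant: for any skew-symmetric B ∈ M_n(ℤ) and any k ∈ [n], δ(μ_k(B)) = δ(B), where μ_k(B) = M_k·B·M_kᵀ with M_k the replicating matrix of B at k. -/

import Mathlib

/-!
Modulo 2 a skew-symmetric matrix `X` agrees with `𝔖(X)`, so with `M = M_k`,
`𝔖(μ_k B) ≡ μ_k B = M B Mᵀ ≡ M 𝔖(B) Mᵀ (mod 2)`, and `det (M 𝔖(B) Mᵀ) = det 𝔖(B)` because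
`det M = -1`. Both matrices are symmetric with diagonal entries `≡ 2 (mod 4)`, so they are
`A' = A + 2C` and `A` with `C` symmetric of even diagonal. Jacobi's formula gives
`det (A + 2C) ≡ det A + 2 tr (adj A · C) (mod 4)`, and `tr (adj A · C)` is even because
`adj A` is symmetric and `C = U + Uᵀ` for an upper triangular `U`.
-/

open Matrix

def upperV {n : ℕ} (B : Matrix (Fin n) (Fin n) ℤ) : Matrix (Fin n) (Fin n) ℤ :=
  Matrix.of fun i j => if i < j then B i j else if i = j then 1 else 0

def symS {n : ℕ} (B : Matrix (Fin n) (Fin n) ℤ) : Matrix (Fin n) (Fin n) ℤ :=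
  upperV B + (upperV B)ᵀ

def deltaInv {n : ℕ} (B : Matrix (Fin n) (Fin n) ℤ) : ℤ := (symS B).det % 4

def repM {n : ℕ} (B : Matrix (Fin n) (Fin n) ℤ) (k : Fin n) : Matrix (Fin n) (Fin n) ℤ :=
  (Matrix.of fun i j => if i = j then (if i = k then (-1 : ℤ) else 1) else 0) +
  (Matrix.of fun i j => if j = k then max 0 (-(B i k)) else 0)

def mutB {n : ℕ} (B : Matrix (Fin n) (Fin n) ℤ) (k : Fin n) : Matrix (Fin n) (Fin n) ℤ :=
  repM B k * B * (repM B k)ᵀ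

namespace Matrix

section Fintype
variable {n R : Type*} [Fintype n] [CommRing R]

theorem transpose_mul_mul_transpose (M X : Matrix n n R) : (M * X * Mᵀ)ᵀ = M * Xᵀ * Mᵀ := by
  rw [transpose_mul, transpose_mul, transpose_transpose, Matrix.mul_assoc]

theorem mul_mul_apply_modEq {m : ℤ} {D D' : Matrix n n ℤ} (h : ∀ p q, D p q ≡ D' p q [ZMOD m])
    (M N : Matrix n n ℤ) (i j : n) : (M * D * N) i j ≡ (M * D' * N) i j [ZMOD m] := by
  simp only [mul_apply]
  gcongr with q _ p _
  exact h p q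

end Fintype

variable {n R : Type*} [Fintype n] [DecidableEq n] [CommRing R]

theorem single_add_smul_single_dotProduct_mulVec (S : Matrix n n R) (i k : n) (c : R) :
    (Pi.single i 1 + c • Pi.single k 1) ⬝ᵥ S *ᵥ (Pi.single i 1 + c • Pi.single k 1) =
      S i i + c * S i k + c * S k i + c ^ 2 * S k k := by
  simp only [mulVec_add, mulVec_single, MulOpposite.op_one, one_smul, mulVec_smul,
    dotProduct_add, add_dotProduct, single_dotProduct, col_apply, one_mul, smul_dotProduct,
    smul_eq_mul, dotProduct_smul]
  ring

theorem dvd_det_sub_det {d : R} {X Y : Matrix n n R} (h : ∀ i j, d ∣ X i j - Y i j) :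
    d ∣ X.det - Y.det := by
  have hXY : X.map (Ideal.Quotient.mk (Ideal.span {d})) = Y.map (Ideal.Quotient.mk _) := by
    ext i j
    exact Ideal.Quotient.eq.2 (Ideal.mem_span_singleton.2 (h i j))
  rw [← Ideal.mem_span_singleton, ← Ideal.Quotient.eq]
  simpa only [RingHom.map_det, RingHom.mapMatrix_apply] using congrArg det hXY

theorem sum_det_updateCol_transpose (A C : Matrix n n R) :
    ∑ j, (A.updateCol j (Cᵀ j)).det = trace (adjugate A * C) := by
  simp only [← cramer_apply, cramer_eq_adjugate_mulVec, trace, diag, mul_apply, mulVec,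
    dotProduct, transpose_apply]

/-- Jacobi's formula for the derivative of the determinant, read modulo `d ^ 2`. -/
theorem sq_dvd_det_add_smul_sub (A C : Matrix n n R) (d : R) :
    d ^ 2 ∣ (A + d • C).det - A.det - d * trace (adjugate A * C) := by
  let F : Finset n → Matrix n n R := fun s =>
    of fun i j => if j ∈ s then A i j + d * C i j else A i j
  suffices ∀ s, d ^ 2 ∣ (F s).det - A.det - d * ∑ j ∈ s, (A.updateCol j (Cᵀ j)).det by
    have hF : F Finset.univ = A + d • C := by ext i j; simp [F]
    simpa only [hF, sum_det_updateCol_transpose] using this Finset.univ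
  intro s
  induction s using Finset.induction_on with
  | empty =>
    have hF : F ∅ = A := by ext i j; simp [F]
    simp [hF]
  | @insert a s ha ih =>
    have hF : F (insert a s) = (F s).updateCol a (Aᵀ a + d • Cᵀ a) := by
      ext i j
      by_cases hj : j = a
      · subst hj; simp [F, ha]
      · simp [F, hj]
    have hFa : (F s).updateCol a (Aᵀ a) = F s := by
      ext i j
      by_cases hj : j = a
      · subst hj; simp [F, ha]
      · simp [hj]
    have hmod : d ∣ ((F s).updateCol a (Cᵀ a)).det - (A.updateCol a (Cᵀ a)).det := by
      refine dvd_det_sub_det fun i j => ?_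
      by_cases hj : j = a
      · simp [hj]
      · by_cases hjs : j ∈ s <;> simp [F, hj, hjs]
    rw [hF, det_updateCol_add, det_updateCol_smul, hFa, Finset.sum_insert ha]
    convert dvd_add ih (sq d ▸ mul_dvd_mul_left d hmod) using 1
    ring

theorem two_dvd_trace_mul_of_isSymm [LinearOrder n] {P Q : Matrix n n R} (hP : P.IsSymm)
    (hQ : Q.IsSymm) (hQd : ∀ i, 2 ∣ Q i i) : 2 ∣ trace (P * Q) := by
  choose q hq using hQd
  let U : Matrix n n R := of fun i j => if i < j then Q i j else if i = j then q i else 0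
  have hQU : Q = U + Uᵀ := by
    ext i j
    rcases lt_trichotomy i j with h | rfl | h
    · simp [U, h, h.not_gt, h.ne']
    · simp [U, hq, two_mul]
    · simp [U, h, h.not_gt, h.ne', ← hQ.apply i j]
  have hPU : trace (P * Uᵀ) = trace (P * U) := by
    rw [← trace_transpose, transpose_mul, transpose_transpose, hP.eq, trace_mul_comm]
  exact ⟨trace (P * U), by rw [hQU, mul_add, trace_add, hPU, two_mul]⟩

theorem det_modEq_four_of_isSymm [LinearOrder n] {A A' : Matrix n n ℤ} (hA : A.IsSymm)
    (hA' : A'.IsSymm) (hoff : ∀ i j, A i j ≡ A' i j [ZMOD 2])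
    (hdiag : ∀ i, A i i ≡ A' i i [ZMOD 4]) : A.det ≡ A'.det [ZMOD 4] := by
  choose c hc using fun i j => Int.ModEq.dvd (hoff i j)
  let C : Matrix n n ℤ := of c
  have hC : C.IsSymm := by
    ext i j
    have := hc i j; have := hc j i; have := hA.apply i j; have := hA'.apply i j
    simp only [transpose_apply, of_apply, C]
    omega
  have hCd : ∀ i, 2 ∣ C i i := fun i => by
    have := hc i i; have := (hdiag i).dvd
    simp only [of_apply, C]
    omega
  have hA'C : A' = A + (2 : ℤ) • C := by
    ext i j; have := hc i j; simp only [add_apply, smul_apply, of_apply, smul_eq_mul, C]; omega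
  have hadj : (adjugate A).IsSymm := by rw [IsSymm, adjugate_transpose, hA.eq]
  obtain ⟨t, ht⟩ := two_dvd_trace_mul_of_isSymm hadj hC hCd
  have key := sq_dvd_det_add_smul_sub A C 2
  rw [← hA'C, ht] at key
  norm_num at key
  exact Int.modEq_iff_dvd.2 (by omega)

end Matrix

section
variable {n : ℕ}

theorem diag_eq_zero_of_transpose_eq_neg {X : Matrix (Fin n) (Fin n) ℤ} (hX : Xᵀ = -X)
    (i : Fin n) : X i i = 0 := by
  have := congrFun (congrFun hX i) i
  simp only [transpose_apply, neg_apply] at this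
  omega

theorem symS_isSymm (X : Matrix (Fin n) (Fin n) ℤ) : (symS X).IsSymm :=
  isSymm_add_transpose_self _

theorem symS_apply_self (X : Matrix (Fin n) (Fin n) ℤ) (i : Fin n) : symS X i i = 2 := by
  simp [symS, upperV]

theorem symS_modEq_two {X : Matrix (Fin n) (Fin n) ℤ} (hX : Xᵀ = -X) (i j : Fin n) :
    symS X i j ≡ X i j [ZMOD 2] := by
  have hji : X j i = -X i j := by simpa using congrFun (congrFun hX i) j
  refine Int.modEq_iff_dvd.2 ?_
  rcases lt_trichotomy i j with h | rfl | h
  · simp [symS, upperV, h, h.not_gt, h.ne']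
  · simp only [symS, upperV, Matrix.add_apply, of_apply, lt_self_iff_false, ↓reduceIte,
      transpose_apply, Int.reduceAdd, dvd_sub_self_right]
    omega
  · simp only [symS, upperV, Matrix.add_apply, of_apply, h.not_gt, ↓reduceIte, h.ne',
      transpose_apply, h, hji, zero_add, sub_neg_eq_add]
    omega

variable {B : Matrix (Fin n) (Fin n) ℤ} {k : Fin n}

theorem repM_self (hB : B k k = 0) : repM B k k = -Pi.single k 1 := by
  ext j
  rcases eq_or_ne j k with rfl | hj
  · simp [repM, hB]
  · simp [repM, hj, hj.symm]

theorem repM_of_ne {i : Fin n} (hik : i ≠ k) :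
    repM B k i = Pi.single i 1 + max 0 (-B i k) • Pi.single k 1 := by
  ext j
  simp only [repM, Matrix.add_apply, of_apply, Pi.add_apply, Pi.smul_apply, Pi.single_apply,
    smul_eq_mul]
  split_ifs <;> grind

theorem det_repM (hB : B k k = 0) : (repM B k).det = -1 := by
  have hM : repM B k = (1 : Matrix (Fin n) (Fin n) ℤ).updateCol k (fun i => repM B k i k) := by
    ext i j
    by_cases hj : j = k
    · simp [hj]
    · by_cases hij : i = j <;> simp [repM, hj, hij, one_apply]
  rw [hM, ← cramer_apply, cramer_eq_adjugate_mulVec, adjugate_one, one_mulVec, repM_self hB]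
  simp

theorem repM_mul_symS_mul_transpose_apply_self_modEq (hB : Bᵀ = -B) (i : Fin n) :
    (repM B k * symS B * (repM B k)ᵀ) i i ≡ 2 [ZMOD 4] := by
  rw [mul_mul_apply, transpose_transpose]
  by_cases hik : i = k
  · subst hik
    simp [repM_self (diag_eq_zero_of_transpose_eq_neg hB i), mulVec_neg, symS_apply_self]
  · rw [repM_of_ne hik, single_add_smul_single_dotProduct_mulVec, symS_apply_self,
      symS_apply_self, (symS_isSymm B).apply i k]
    -- with `c = max 0 (-B i k)` the entry is `2 + 2 c (S i k + c) + ...`; since `S i k ≡ B i k`,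
    -- `c (S i k + c)` is even both when `c = 0` and when `c = -B i k`
    obtain ⟨t, ht⟩ := (symS_modEq_two hB i k).dvd
    rcases le_total (-B i k) 0 with h | h
    · simp [max_eq_left h]
    · rw [max_eq_right h]
      exact Int.modEq_iff_dvd.2 ⟨-B i k * t, by linear_combination (-2 * B i k) * ht⟩

end

theorem stmt_15 {n : ℕ} (B : Matrix (Fin n) (Fin n) ℤ) (hB : Bᵀ = -B) (k : Fin n) :
    deltaInv (mutB B k) = deltaInv B := by
  set M := repM B k
  have hdet : (M * symS B * Mᵀ).det = (symS B).det := by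
    rw [det_mul, det_mul, det_transpose, det_repM (diag_eq_zero_of_transpose_eq_neg hB k)]
    ring
  have hmut : (mutB B k)ᵀ = -mutB B k := by
    rw [mutB, transpose_mul_mul_transpose, hB, Matrix.mul_neg, Matrix.neg_mul]
  have hsymm : (M * symS B * Mᵀ).IsSymm := by
    rw [IsSymm, transpose_mul_mul_transpose, (symS_isSymm B).eq]
  show _ ≡ _ [ZMOD 4]
  rw [← hdet]
  refine det_modEq_four_of_isSymm (symS_isSymm _) hsymm (fun i j => ?_) (fun i => ?_)
  · calc symS (mutB B k) i j ≡ mutB B k i j [ZMOD 2] := symS_modEq_two hmut i j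
      _ ≡ (M * symS B * Mᵀ) i j [ZMOD 2] :=
        mul_mul_apply_modEq (fun p q => (symS_modEq_two hB p q).symm) M Mᵀ i j
  · rw [symS_apply_self]
    exact (repM_mul_symS_mul_transpose_apply_self_modEq hB i).symm
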